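/- Let M > 0 and let {A_n} and {B_n} be sequences of Hermitian n×n complex matrices with spectral norms ‖A_n‖_∞ ≤ M and ‖B_n‖_∞ ≤ M for all n, and with ‖A_n − B_n‖_tr = o(n) as n → ∞. Then for every continuous function φ : ℝ → ℝ, one has Σ_{k=1}^{n} φ(λ_k(A_n)) − Σ_{k=1}^{n} φ(λ_k(B_n)) = o(n) as n → ∞, where λ_1, …, λ_n denote the (real) eigenvalues counted with multiplicity. -/

import Mathlib

open Filter Asymptotics Matrix

/-- The spectral norm (ℓ² → ℓ² operator norm, i.e. the largest singular value)
of a complex matrix. -/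
noncomputable def specNorm {n : ℕ} (A : Matrix (Fin n) (Fin n) ℂ) : ℝ :=
  ‖LinearMap.toContinuousLinearMap (Matrix.toEuclideanLin A)‖

/-- The trace norm `‖A‖_tr = ∑ σ_k(A)`, the sum of the singular values of `A`,
i.e. of the square roots of the eigenvalues of `Aᴴ A`. -/
noncomputable def traceNorm {n : ℕ} (A : Matrix (Fin n) (Fin n) ℂ) : ℝ :=
  ∑ i, Real.sqrt ((Matrix.isHermitian_conjTranspose_mul_self A).eigenvalues i)

open scoped Matrix.Norms.L2Operator

/-!
The eigenvalues of `A n` and `B n` lie in `[-M, M]`, where Weierstrass gives a polynomial `p` with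
`|φ - p| ≤ ε`; replacing `φ` by `p` changes each eigenvalue sum by at most `n ε`. For `p` it is
enough to compare power sums `tr (A ^ k) - tr (B ^ k)`. Writing
`A ^ (k + 1) - B ^ (k + 1) = A ^ k (A - B) + (A ^ k - B ^ k) B` and using Hölder's inequality
`|tr (C Y)| ≤ ‖C‖_tr ‖Y‖` for Hermitian `C`, induction on `k` gives
`|tr ((A ^ k - B ^ k) Y)| ≤ k M ^ (k - 1) ‖A - B‖_tr ‖Y‖`, so the polynomial sums differ by
`O(‖A - B‖_tr) = o(n)`.
-/

lemma Asymptotics.isLittleO_of_forall_approx {α E F : Type*} [SeminormedAddCommGroup E] [Norm F]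
    {l : Filter α} {f : α → E} {k : α → F}
    (h : ∀ ε > 0, ∃ g : α → E, g =o[l] k ∧ ∀ᶠ x in l, ‖f x - g x‖ ≤ ε * ‖k x‖) :
    f =o[l] k := by
  refine isLittleO_iff.2 fun c hc => ?_
  obtain ⟨g, hg, hfg⟩ := h (c / 2) (half_pos hc)
  filter_upwards [hfg, hg.bound (half_pos hc)] with x hfgx hgx
  calc ‖f x‖ ≤ ‖f x - g x‖ + ‖g x‖ := norm_le_norm_sub_add _ _
    _ ≤ c * ‖k x‖ := by linarith

lemma abs_sum_sub_sum_le_card_mul {ι : Type*} [Fintype ι] {f g : ι → ℝ} {ε : ℝ}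
    (h : ∀ i, |f i - g i| ≤ ε) : |∑ i, f i - ∑ i, g i| ≤ Fintype.card ι * ε := by
  calc |∑ i, f i - ∑ i, g i| = |∑ i, (f i - g i)| := by rw [Finset.sum_sub_distrib]
    _ ≤ ∑ i, |f i - g i| := Finset.abs_sum_le_sum_abs _ _
    _ ≤ ∑ _i : ι, ε := Finset.sum_le_sum fun i _ => h i
    _ = Fintype.card ι * ε := by simp

namespace Matrix

variable {𝕜 : Type*} [RCLike 𝕜] {ι : Type*} [Fintype ι] [DecidableEq ι]

lemma norm_entry_le_l2_opNorm {m : Type*} [Fintype m] (A : Matrix m ι 𝕜) (i : m) (j : ι) :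
    ‖A i j‖ ≤ ‖A‖ := by
  calc ‖A i j‖ = ‖(EuclideanSpace.equiv m 𝕜).symm (A *ᵥ (EuclideanSpace.single j 1).ofLp) i‖ := by
        simp
    _ ≤ ‖(EuclideanSpace.equiv m 𝕜).symm (A *ᵥ (EuclideanSpace.single j 1).ofLp)‖ :=
        PiLp.norm_apply_le _ _
    _ ≤ ‖A‖ * ‖EuclideanSpace.single j (1 : 𝕜)‖ := l2_opNorm_mulVec _ _
    _ = ‖A‖ := by simp

lemma l2_opNorm_one_le : ‖(1 : Matrix ι ι 𝕜)‖ ≤ 1 :=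
  IsStarProjection.norm_le _ (.one _)

lemma l2_opNorm_pow_le {A : Matrix ι ι 𝕜} {M : ℝ} (hA : ‖A‖ ≤ M) (k : ℕ) : ‖A ^ k‖ ≤ M ^ k := by
  induction k with
  | zero => simpa using l2_opNorm_one_le
  | succ k ih =>
    rw [pow_succ, pow_succ]
    exact (l2_opNorm_mul _ _).trans <|
      mul_le_mul ih hA (norm_nonneg _) (pow_nonneg ((norm_nonneg A).trans hA) _)

namespace IsHermitian

lemma abs_eigenvalues_le {A : Matrix ι ι ℂ} (hA : A.IsHermitian) (i : ι) :
    |hA.eigenvalues i| ≤ ‖A‖ := by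
  -- makes the matrix ring nontrivial, so that `‖1‖ = 1`
  have : Nonempty ι := ⟨i⟩
  simpa using spectrum.norm_le_norm_of_mem (𝕜 := ℝ) (hA.eigenvalues_mem_spectrum_real i)

variable {A : Matrix ι ι 𝕜} (hA : A.IsHermitian)
include hA

lemma trace_cfc (f : ℝ → ℝ) : (hA.cfc f).trace = ∑ i, (f (hA.eigenvalues i) : 𝕜) := by
  simp [IsHermitian.cfc, Unitary.conjStarAlgAut_apply, trace_mul_cycle, trace_diagonal]

lemma trace_pow (k : ℕ) : (A ^ k).trace = ∑ i, (hA.eigenvalues i ^ k : 𝕜) := by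
  have : IsSelfAdjoint A := hA
  rw [← cfc_pow_id (R := ℝ) A, hA.cfc_eq, trace_cfc]
  simp

lemma norm_trace_mul_le (Y : Matrix ι ι 𝕜) :
    ‖(A * Y).trace‖ ≤ (∑ i, |hA.eigenvalues i|) * ‖Y‖ := by
  set U : Matrix ι ι 𝕜 := (hA.eigenvectorUnitary : Matrix ι ι 𝕜)
  have hU : U ∈ unitary _ := hA.eigenvectorUnitary.2
  have htr : (A * Y).trace = ∑ i, (hA.eigenvalues i : 𝕜) * (star U * Y * U) i i := by
    conv_lhs => rw [hA.spectral_theorem, Unitary.conjStarAlgAut_apply]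
    rw [trace_mul_comm, ← mul_assoc, trace_mul_cycle, ← mul_assoc]
    simp [trace, U, mul_comm]
  rw [htr, Finset.sum_mul]
  refine (norm_sum_le _ _).trans (Finset.sum_le_sum fun i _ => ?_)
  rw [norm_mul, RCLike.norm_ofReal]
  refine mul_le_mul_of_nonneg_left ((norm_entry_le_l2_opNorm _ i i).trans ?_) (abs_nonneg _)
  rw [CStarRing.norm_mul_mem_unitary _ hU, CStarRing.norm_mem_unitary_mul _ (Unitary.star_mem hU)]

end IsHermitian
end Matrix

section TraceNorm

variable {n : ℕ}

lemma specNorm_eq_l2_opNorm (A : Matrix (Fin n) (Fin n) ℂ) : specNorm A = ‖A‖ := rfl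

lemma traceNorm_nonneg (A : Matrix (Fin n) (Fin n) ℂ) : 0 ≤ traceNorm A :=
  Finset.sum_nonneg fun _ _ => Real.sqrt_nonneg _

lemma traceNorm_eq_sum_abs_eigenvalues {C : Matrix (Fin n) (Fin n) ℂ} (hC : C.IsHermitian) :
    traceNorm C = ∑ i, |hC.eigenvalues i| := by
  have hCC := isHermitian_conjTranspose_mul_self C
  have : IsSelfAdjoint C := hC
  have hcfc : hCC.cfc Real.sqrt = hC.cfc (|·|) := by
    rw [← hCC.cfc_eq, ← hC.cfc_eq, hC.eq, ← sq, ← cfc_pow_id (R := ℝ) C,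
      ← cfc_comp Real.sqrt (· ^ 2) C]
    exact cfc_congr fun x _ => Real.sqrt_sq_eq_abs x
  have htr := congrArg trace hcfc
  rw [hCC.trace_cfc, hC.trace_cfc] at htr
  exact_mod_cast htr

lemma norm_trace_mul_le_traceNorm_mul {C : Matrix (Fin n) (Fin n) ℂ} (hC : C.IsHermitian)
    (Y : Matrix (Fin n) (Fin n) ℂ) : ‖(C * Y).trace‖ ≤ traceNorm C * ‖Y‖ :=
  traceNorm_eq_sum_abs_eigenvalues hC ▸ hC.norm_trace_mul_le Y

variable {A B : Matrix (Fin n) (Fin n) ℂ} {M : ℝ} (hMA : ‖A‖ ≤ M) (hMB : ‖B‖ ≤ M)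
include hMA hMB

lemma norm_trace_pow_sub_pow_mul_le (hAB : (A - B).IsHermitian) (k : ℕ)
    (Y : Matrix (Fin n) (Fin n) ℂ) :
    ‖((A ^ k - B ^ k) * Y).trace‖ ≤ k * M ^ (k - 1) * traceNorm (A - B) * ‖Y‖ := by
  induction k generalizing Y with
  | zero => simp
  | succ k ih =>
    have hM : 0 ≤ M := (norm_nonneg A).trans hMA
    have ht := traceNorm_nonneg (A - B)
    have hsplit : (A ^ (k + 1) - B ^ (k + 1)) * Y =
        A ^ k * ((A - B) * Y) + (A ^ k - B ^ k) * (B * Y) := by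
      rw [pow_succ, pow_succ]; noncomm_ring
    rw [hsplit, trace_add, trace_mul_comm (A ^ k), mul_assoc]
    calc _ ≤ ‖((A - B) * (Y * A ^ k)).trace‖ + ‖((A ^ k - B ^ k) * (B * Y)).trace‖ :=
          norm_add_le _ _
      _ ≤ traceNorm (A - B) * (‖Y‖ * M ^ k) + k * M ^ (k - 1) * traceNorm (A - B) * (M * ‖Y‖) := by
          gcongr
          · refine (norm_trace_mul_le_traceNorm_mul hAB _).trans ?_
            gcongr
            exact (l2_opNorm_mul _ _).trans (by gcongr; exact l2_opNorm_pow_le hMA k)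
          · exact (ih _).trans (by gcongr; exact (l2_opNorm_mul _ _).trans (by gcongr))
      _ = (k + 1 : ℕ) * M ^ (k + 1 - 1) * traceNorm (A - B) * ‖Y‖ := by
          rcases k with _ | k
          · simp
          · simp only [pow_succ]; push_cast; ring

variable (hA : A.IsHermitian) (hB : B.IsHermitian)
include hA hB

lemma abs_sum_pow_eigenvalues_sub_le (k : ℕ) :
    |∑ i, hA.eigenvalues i ^ k - ∑ i, hB.eigenvalues i ^ k| ≤
      k * M ^ (k - 1) * traceNorm (A - B) := by
  have h := norm_trace_pow_sub_pow_mul_le hMA hMB (hA.sub hB) k 1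
  rw [mul_one, trace_sub, hA.trace_pow, hB.trace_pow] at h
  have hM : 0 ≤ M := (norm_nonneg A).trans hMA
  calc _ = ‖∑ i, (hA.eigenvalues i ^ k : ℂ) - ∑ i, (hB.eigenvalues i ^ k : ℂ)‖ := by
        simp_rw [← Complex.ofReal_pow, ← Complex.ofReal_sum, ← Complex.ofReal_sub,
          Complex.norm_real, Real.norm_eq_abs]
    _ ≤ _ := h.trans (mul_le_of_le_one_right (by positivity [traceNorm_nonneg (A - B)])
          l2_opNorm_one_le)

lemma abs_sum_eval_eigenvalues_sub_le (p : Polynomial ℝ) :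
    |∑ i, p.eval (hA.eigenvalues i) - ∑ i, p.eval (hB.eigenvalues i)| ≤
      (∑ k ∈ Finset.range (p.natDegree + 1), |p.coeff k| * (k * M ^ (k - 1))) *
        traceNorm (A - B) := by
  have hexpand (x : Fin n → ℝ) : ∑ i, p.eval (x i) =
      ∑ k ∈ Finset.range (p.natDegree + 1), p.coeff k * ∑ i, x i ^ k := by
    simp_rw [Polynomial.eval_eq_sum_range, Finset.mul_sum]
    exact Finset.sum_comm
  rw [hexpand, hexpand, ← Finset.sum_sub_distrib, Finset.sum_mul]
  refine (Finset.abs_sum_le_sum_abs _ _).trans (Finset.sum_le_sum fun k _ => ?_)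
  rw [← mul_sub, abs_mul, mul_assoc]
  exact mul_le_mul_of_nonneg_left (abs_sum_pow_eigenvalues_sub_le hMA hMB hA hB k) (abs_nonneg _)

end TraceNorm

lemma isLittleO_sum_eval_eigenvalues_sub {M : ℝ} {A B : ∀ n : ℕ, Matrix (Fin n) (Fin n) ℂ}
    (hAh : ∀ n, (A n).IsHermitian) (hBh : ∀ n, (B n).IsHermitian)
    (hA : ∀ n, ‖A n‖ ≤ M) (hB : ∀ n, ‖B n‖ ≤ M)
    (htr : (fun n : ℕ => traceNorm (A n - B n)) =o[atTop] (fun n : ℕ => (n : ℝ)))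
    (p : Polynomial ℝ) :
    (fun n : ℕ => ∑ i, p.eval ((hAh n).eigenvalues i) - ∑ i, p.eval ((hBh n).eigenvalues i))
      =o[atTop] (fun n : ℕ => (n : ℝ)) := by
  refine IsBigO.trans_isLittleO (isBigO_of_le' atTop
    (c := ∑ k ∈ Finset.range (p.natDegree + 1), |p.coeff k| * (k * M ^ (k - 1))) fun n => ?_) htr
  rw [Real.norm_eq_abs, Real.norm_eq_abs, abs_of_nonneg (traceNorm_nonneg _)]
  exact abs_sum_eval_eigenvalues_sub_le (hA n) (hB n) (hAh n) (hBh n) p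

theorem trace_comparison_hermitian_general (M : ℝ)
    (A B : ∀ n : ℕ, Matrix (Fin n) (Fin n) ℂ)
    (hAh : ∀ n, (A n).IsHermitian) (hBh : ∀ n, (B n).IsHermitian)
    (hA : ∀ n, specNorm (A n) ≤ M) (hB : ∀ n, specNorm (B n) ≤ M)
    (htr : (fun n : ℕ => traceNorm (A n - B n)) =o[atTop] (fun n : ℕ => (n : ℝ)))
    (φ : ℝ → ℝ) (hφ : Continuous φ) :
    (fun n : ℕ => (∑ i : Fin n, φ ((hAh n).eigenvalues i)) -
        ∑ i : Fin n, φ ((hBh n).eigenvalues i))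
      =o[atTop] (fun n : ℕ => (n : ℝ)) := by
  simp only [specNorm_eq_l2_opNorm] at hA hB
  refine isLittleO_of_forall_approx fun ε hε => ?_
  obtain ⟨p, hp⟩ := exists_polynomial_near_of_continuousOn (-M) M φ hφ.continuousOn (ε / 2)
    (half_pos hε)
  have hφp {n : ℕ} {C : Matrix (Fin n) (Fin n) ℂ} (hC : C.IsHermitian) (hCM : ‖C‖ ≤ M) :
      |∑ i, φ (hC.eigenvalues i) - ∑ i, p.eval (hC.eigenvalues i)| ≤ n * (ε / 2) := by
    simpa using abs_sum_sub_sum_le_card_mul fun i =>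
      (abs_sub_comm _ _).trans_le (hp _ (abs_le.1 ((hC.abs_eigenvalues_le i).trans hCM))).le
  refine ⟨_, isLittleO_sum_eval_eigenvalues_sub hAh hBh hA hB htr p, .of_forall fun n => ?_⟩
  have hφpA := abs_le.1 (hφp (hAh n) (hA n))
  have hφpB := abs_le.1 (hφp (hBh n) (hB n))
  rw [Real.norm_eq_abs, Real.norm_eq_abs, Nat.abs_cast, abs_le]
  constructor <;> linarith

/-- If `{Aₙ}` and `{Bₙ}` are Hermitian with `‖Aₙ‖_∞ ≤ M`, `‖Bₙ‖_∞ ≤ M` and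
`‖Aₙ - Bₙ‖_tr = o(n)`, then for every continuous `φ : ℝ → ℝ`,
`∑_k φ(λ_k(Aₙ)) - ∑_k φ(λ_k(Bₙ)) = o(n)`, where the (real) eigenvalues are counted with
multiplicity. -/
theorem trace_comparison_hermitian (M : ℝ) (hM : 0 < M)
    (A B : ∀ n : ℕ, Matrix (Fin n) (Fin n) ℂ)
    (hAh : ∀ n, (A n).IsHermitian) (hBh : ∀ n, (B n).IsHermitian)
    (hA : ∀ n, specNorm (A n) ≤ M) (hB : ∀ n, specNorm (B n) ≤ M)
    (htr : (fun n : ℕ => traceNorm (A n - B n)) =o[atTop] (fun n : ℕ => (n : ℝ)))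
    (φ : ℝ → ℝ) (hφ : Continuous φ) :
    (fun n : ℕ => (∑ i : Fin n, φ ((hAh n).eigenvalues i)) -
        ∑ i : Fin n, φ ((hBh n).eigenvalues i))
      =o[atTop] (fun n : ℕ => (n : ℝ)) :=
  trace_comparison_hermitian_general M A B hAh hBh hA hB htr φ hφ
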